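/- arXiv:2501.10033 — 4 statements merged into one kernel-verified Lean document; each statement's English description precedes it below -/
import Mathlib

section
/- Let E be a linearly ordered field, O a convex subring of E containing 1 with O ≠ E, and 𝔪 = {x ∈ E : x = 0 or x⁻¹ ∉ O} its set of infinitesimal elements relative to O. If K is a subfield of E dense in E, then for every x ∈ O there exists c ∈ K ∩ O with x − c ∈ 𝔪. (In other words, the residue map restricted to K ∩ O is surjective onto the residue field of O.) -/
/-- The maximal ideal (set of infinitesimals) of a convex subring `O` of an ordered
field: the elements `x` with `x = 0` or `x⁻¹ ∉ O`. -/
def mIdeal {E : Type*} [Field E] [LinearOrder E] [IsStrictOrderedRing E] (O : Subring E) : Set E :=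
  {x : E | x = 0 ∨ x⁻¹ ∉ O}

/-! The ring `O` is not all of `E`, so it contains a positive `ε` with `ε⁻¹ ∉ O`; by convexity
every `y` with `|y| < ε` is infinitesimal, since otherwise `|y⁻¹| > ε⁻¹` would force `ε⁻¹ ∈ O`.
Density of `K` gives `c ∈ K` with `x < c < x + ε`, which lies in `O` by convexity and is
infinitely close to `x`. -/

namespace Subring

variable {E : Type*} [Field E] [LinearOrder E] [IsStrictOrderedRing E] {O : Subring E}

theorem mem_of_abs_le_abs (hO : (O : Set E).OrdConnected) {b c : E} (hc : c ∈ O)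
    (h : |b| ≤ |c|) : b ∈ O := by
  have habs : |c| ∈ O := by
    rcases abs_choice c with hc' | hc' <;> rw [hc']
    exacts [hc, O.neg_mem hc]
  exact hO.out (O.neg_mem habs) habs (abs_le.mp h)

theorem exists_pos_mem_inv_notMem (hO : (O : Set E).OrdConnected) (hne : O ≠ ⊤) :
    ∃ ε : E, 0 < ε ∧ ε ∈ O ∧ ε⁻¹ ∉ O := by
  obtain ⟨u, hu⟩ : ∃ u, u ∉ O := by
    by_contra! h
    exact hne (eq_top_iff.mpr fun u _ => h u)
  have hu_big : 1 < |u| := by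
    by_contra! h
    exact hu (mem_of_abs_le_abs hO O.one_mem (by rwa [abs_one]))
  refine ⟨|u|⁻¹, by positivity, mem_of_abs_le_abs hO O.one_mem ?_, ?_⟩
  · rw [abs_one, abs_inv, abs_abs]
    exact inv_le_one_of_one_le₀ hu_big.le
  · rw [inv_inv]
    exact fun h => hu (mem_of_abs_le_abs hO h (abs_abs u).ge)

theorem mem_mIdeal_of_abs_lt (hO : (O : Set E).OrdConnected) {ε y : E} (hε : ε⁻¹ ∉ O)
    (hy : |y| < ε) : y ∈ mIdeal O := by
  refine or_iff_not_imp_left.mpr fun hy0 hyinv => hε (mem_of_abs_le_abs hO hyinv ?_)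
  have hpos : 0 < |y| := abs_pos.mpr hy0
  rw [abs_inv, abs_inv, abs_of_pos (hpos.trans hy)]
  exact (inv_lt_inv₀ (hpos.trans hy) hpos).mpr hy |>.le

end Subring

/-- If K is a dense subfield of E and O a proper convex subring, then every
element of O is within an infinitesimal of an element of K ∩ O. -/
theorem stmt_2 {E : Type*} [Field E] [LinearOrder E] [IsStrictOrderedRing E] (O : Subring E)
    (hconv : ∀ a b c : E, a ∈ O → c ∈ O → a ≤ b → b ≤ c → b ∈ O)
    (hOne : (O : Set E) ≠ Set.univ)
    (K : Subfield E)
    (hdense : ∀ a b : E, a < b → ∃ k ∈ K, a < k ∧ k < b) :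
    ∀ x ∈ O, ∃ c : E, c ∈ K ∧ c ∈ O ∧ x - c ∈ mIdeal O := by
  intro x hx
  have hO : (O : Set E).OrdConnected := ⟨fun a ha c hc b hb => hconv a b c ha hc hb.1 hb.2⟩
  obtain ⟨ε, hε, hεO, hεinv⟩ :=
    Subring.exists_pos_mem_inv_notMem hO fun h => hOne (by rw [h, Subring.coe_top])
  obtain ⟨c, hcK, hxc, hcx⟩ := hdense x (x + ε) (lt_add_of_pos_right x hε)
  refine ⟨c, hcK, hO.out hx (O.add_mem hx hεO) ⟨hxc.le, hcx.le⟩, ?_⟩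
  refine Subring.mem_mIdeal_of_abs_lt hO hεinv ?_
  rw [abs_sub_comm, abs_of_pos (sub_pos.mpr hxc)]
  linarith
end

section
/- Let E be a linearly ordered field, O a proper convex subring of E containing 1, with associated valuation v : E^{×} → Γ (where Γ = E^{×}/O^{×} is the value group, ordered so that v(x) ≥ 0 iff x ∈ O). If K is a subfield of E dense in E, then v(K^{×}) = v(E^{×}), i.e., for every z ∈ E with z > 0 there exists c ∈ K with v(c) = v(z). -/
/-! Density gives `c ∈ K` with `z / 2 < c < z`; then `c / z ∈ [0, 1]` and `z / c ∈ [0, 2]`,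
and these intervals have endpoints in `O`, hence lie in `O` by convexity. -/

theorem div_mem_Icc_zero_one_of_lt {E : Type*} [Field E] [LinearOrder E] [IsStrictOrderedRing E]
    {c z : E} (hc : 0 < c) (hcz : c < z) : c / z ∈ Set.Icc 0 1 :=
  ⟨by have := hc.trans hcz; positivity, (div_le_one (hc.trans hcz)).2 hcz.le⟩

theorem div_mem_Icc_zero_two_of_half_lt {E : Type*} [Field E] [LinearOrder E]
    [IsStrictOrderedRing E] {c z : E} (hz : 0 < z) (hzc : z / 2 < c) :
    z / c ∈ Set.Icc 0 2 := by
  have hc : 0 < c := (half_pos hz).trans hzc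
  refine ⟨by positivity, ?_⟩
  rw [div_le_iff₀ hc]
  linarith

theorem stmt_3_general {E : Type*} [Field E] [LinearOrder E] [IsStrictOrderedRing E] (O : Subring E)
    (hconv : ∀ a b c : E, a ∈ O → c ∈ O → a ≤ b → b ≤ c → b ∈ O)
    (K : Subfield E)
    (hdense : ∀ a b : E, a < b → ∃ k ∈ K, a < k ∧ k < b) :
    ∀ z : E, 0 < z → ∃ c ∈ K, c / z ∈ O ∧ z / c ∈ O := by
  intro z hz
  obtain ⟨c, hcK, hzc, hcz⟩ := hdense (z / 2) z (half_lt_self hz)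
  have hc : 0 < c := (half_pos hz).trans hzc
  obtain ⟨hcz₀, hcz₁⟩ := div_mem_Icc_zero_one_of_lt hc hcz
  obtain ⟨hzc₀, hzc₂⟩ := div_mem_Icc_zero_two_of_half_lt hz hzc
  exact ⟨c, hcK, hconv 0 _ 1 O.zero_mem O.one_mem hcz₀ hcz₁,
    hconv 0 _ 2 O.zero_mem (ofNat_mem O 2) hzc₀ hzc₂⟩

/-- A dense subfield K of an ordered field E with a proper convex subring O
has full value group: every positive z ∈ E has the same value as some c ∈ K
(`c ≍ z`, i.e. `c/z ∈ O` and `z/c ∈ O`). -/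
theorem stmt_3 {E : Type*} [Field E] [LinearOrder E] [IsStrictOrderedRing E] (O : Subring E)
    (hconv : ∀ a b c : E, a ∈ O → c ∈ O → a ≤ b → b ≤ c → b ∈ O)
    (hOne : (O : Set E) ≠ Set.univ)
    (K : Subfield E)
    (hdense : ∀ a b : E, a < b → ∃ k ∈ K, a < k ∧ k < b) :
    ∀ z : E, 0 < z → ∃ c ∈ K, c / z ∈ O ∧ z / c ∈ O :=
  stmt_3_general O hconv K hdense
end

section
/- Let E be a linearly ordered field and O a proper convex subring of E containing 1, with residue field k = O/𝔪 and value group Γ = E^{×}/O^{×}. If E contains a subset order-isomorphic to ω₁, then either the residue field k (with its induced linear order) contains a subset order-isomorphic to ω₁, or the value group Γ contains a subset order-isomorphic to ω₁ or one order-isomorphic to the reverse order of ω₁. -/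
open Cardinal Ordinal

universe u

section Subring

variable {K : Type*} [DivisionRing K] {O : Subring K} {a b d : K}

theorem Subring.div_mem_trans (hb : b ≠ 0) (hab : a / b ∈ O) (hbd : b / d ∈ O) : a / d ∈ O :=
  div_mul_div_cancel₀ hb ▸ O.mul_mem hab hbd

end Subring

section ConvexSubring

variable {E : Type*} [Field E] [LinearOrder E] [IsStrictOrderedRing E] {O : Subring E} {a b : E}

theorem Subring.div_mem_of_le (hO : (O : Set E).OrdConnected) (ha : 0 ≤ a) (hab : a ≤ b) :
    a / b ∈ O :=
  hO.out O.zero_mem O.one_mem ⟨div_nonneg ha (ha.trans hab), div_le_one_of_le₀ hab (ha.trans hab)⟩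

theorem div_mem_mIdeal_iff (ha : a ≠ 0) (hb : b ≠ 0) : a / b ∈ mIdeal O ↔ b / a ∉ O := by
  simp [mIdeal, ha, hb, inv_div]

theorem exists_residue_chain_of_unit_gaps {ι : Type*} [LinearOrder ι] {y : ι → E}
    (hy : StrictMono y) (hgap : ∀ i j, i < j → y j - y i ∈ O ∧ (y j - y i)⁻¹ ∈ O) (a : ι) :
    ∃ f : ι → E, (∀ i, f i ∈ O) ∧ ∀ i j, i < j → f i < f j ∧ f j - f i ∉ mIdeal O := by
  refine ⟨fun i => y i - y a, fun i => ?_, fun i j hij => ?_⟩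
  · rcases lt_trichotomy i a with hia | rfl | hai
    · simpa using O.neg_mem (hgap i a hia).1
    · simp
    · exact (hgap a i hai).1
  · simp only [sub_lt_sub_iff_right, sub_sub_sub_cancel_right]
    refine ⟨hy hij, ?_⟩
    rintro (h0 | hinv)
    · exact (sub_pos.2 (hy hij)).ne' h0
    · exact hinv (hgap i j hij).2

def IsEventualGap {ι : Type*} [LinearOrder ι] (O : Subring E) (x : ι → E) (b : ι → ι)
    (ρ : ι → E) : Prop :=
  ∀ i, 0 < ρ i ∧ i < b i ∧ ∀ k, b i ≤ k → (x k - x i) / ρ i ∈ O ∧ ρ i / (x k - x i) ∈ O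

theorem IsEventualGap.div_mem {ι : Type*} [LinearOrder ι] {x : ι → E} {b : ι → ι} {ρ : ι → E}
    (h : IsEventualGap O x b ρ) (hO : (O : Set E).OrdConnected) (hx : StrictMono x) {i j : ι}
    (hij : i ≤ j) : ρ j / ρ i ∈ O := by
  set k := max (b i) (b j)
  have hik : x i < x k := hx ((h i).2.1.trans_le (le_max_left _ _))
  have hjk : x j < x k := hx ((h j).2.1.trans_le (le_max_right _ _))
  have hgap_le : x k - x j ≤ x k - x i := sub_le_sub_left (hx.monotone hij) _
  exact Subring.div_mem_trans (sub_pos.2 hjk).ne' ((h j).2.2 k (le_max_right _ _)).2 <|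
    Subring.div_mem_trans (sub_pos.2 hik).ne' (Subring.div_mem_of_le hO (sub_pos.2 hjk).le hgap_le)
      ((h i).2.2 k (le_max_left _ _)).1

end ConvexSubring

section RegularCardinal

variable {c : Cardinal.{u}}

local notation "𝕀" => {o : Ordinal // o < c.ord}

theorem Cardinal.IsRegular.exists_gt (hc : c.IsRegular) (i : 𝕀) : ∃ j, i < j :=
  ⟨⟨Order.succ i.1, (isSuccLimit_ord hc.aleph0_le).succ_lt i.2⟩, Order.lt_succ i.1⟩

theorem Cardinal.IsRegular.exists_forall_lt (hc : c.IsRegular) (j : 𝕀) (f : ∀ i : 𝕀, i < j → 𝕀) :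
    ∃ b : 𝕀, ∀ i hi, f i hi < b := by
  let g : Set.Iio j.1 → Ordinal.{u} := fun a => (f ⟨a, a.2.trans j.2⟩ a.2).1
  have hcard : Cardinal.lift.{u} #(Set.Iio j.1) < (Ordinal.lift.{u + 1} c.ord).cof := by
    rw [← lift_cof, hc.cof_ord, Cardinal.mk_Iio_ordinal, lift_lift, lift_lt, ← lt_ord]
    exact j.2
  refine ⟨⟨⨆ a, g a + 1, lift_iSup_add_one_lt_of_lt_cof hcard fun a => (f _ _).2⟩, fun i hi => ?_⟩
  show g ⟨i.1, hi⟩ < ⨆ a, g a + 1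
  exact (Order.lt_add_one_iff.2 le_rfl).trans_le (Ordinal.le_iSup (fun a => g a + 1) ⟨i.1, hi⟩)

theorem Cardinal.IsRegular.exists_strictMono_outrun (hc : c.IsRegular) (a : 𝕀) (h : 𝕀 → 𝕀) :
    ∃ φ : 𝕀 → 𝕀, StrictMono φ ∧ (∀ i, a ≤ φ i) ∧ ∀ i j, i < j → h (φ i) < φ j := by
  choose bound hbound using hc.exists_forall_lt
  let φ : 𝕀 → 𝕀 :=
    wellFounded_lt.fix fun j φ => max a (bound j fun i hi => max (φ i hi) (h (φ i hi)))
  have hφ (j : 𝕀) : φ j = max a (bound j fun i _ => max (φ i) (h (φ i))) :=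
    wellFounded_lt.fix_eq _ j
  have hlt (i j : 𝕀) (hij : i < j) : max (φ i) (h (φ i)) < φ j := by
    rw [hφ j]
    exact lt_max_of_lt_right (hbound j (fun i _ => max (φ i) (h (φ i))) i hij)
  exact ⟨φ, fun i j hij => (le_max_left _ _).trans_lt (hlt i j hij),
    fun j => (hφ j).symm ▸ le_max_left _ _, fun i j hij => (le_max_right _ _).trans_lt (hlt i j hij)⟩

variable {E : Type*} [Field E] [LinearOrder E] [IsStrictOrderedRing E] {O : Subring E}

theorem exists_div_mem_mIdeal_of_unbounded (hc : c.IsRegular) {u : 𝕀 → E} (hu : ∀ i, u i ≠ 0)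
    (hmono : ∀ i j, i ≤ j → u i / u j ∈ O) (hesc : ∀ i, ∃ j, u j / u i ∉ O) :
    ∃ g : 𝕀 → E, (∀ i, g i ≠ 0) ∧ ∀ i j, i < j → g i / g j ∈ mIdeal O := by
  choose k hk using hesc
  obtain ⟨φ, -, -, hφ⟩ := hc.exists_strictMono_outrun ⟨0, hc.ord_pos⟩ k
  refine ⟨u ∘ φ, fun i => hu _, fun i j hij => (div_mem_mIdeal_iff (hu _) (hu _)).2 fun hji => ?_⟩
  exact hk (φ i) (Subring.div_mem_trans (hu (φ j)) (hmono _ _ (hφ i j hij).le) hji)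

theorem exists_reverse_value_chain_of_unstable (hO : (O : Set E).OrdConnected) (hc : c.IsRegular)
    {x : 𝕀 → E} (hx : StrictMono x) (i₀ : 𝕀)
    (hi₀ : ∀ j, i₀ < j → ∃ k, j ≤ k ∧ (x k - x i₀) / (x j - x i₀) ∉ O) :
    ∃ g : 𝕀 → E, (∀ i, g i ≠ 0) ∧ ∀ i j, i < j → g i / g j ∈ mIdeal O := by
  obtain ⟨j₀, hj₀⟩ := hc.exists_gt i₀
  have hlt (i : 𝕀) : i₀ < max i j₀ := hj₀.trans_le (le_max_right _ _)
  have hpos (i : 𝕀) : 0 < x (max i j₀) - x i₀ := sub_pos.2 (hx (hlt i))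
  refine exists_div_mem_mIdeal_of_unbounded hc (u := fun i => x (max i j₀) - x i₀)
    (fun i => (hpos i).ne') (fun i j hij => Subring.div_mem_of_le hO (hpos i).le ?_) fun i => ?_
  · exact sub_le_sub_right (hx.monotone (max_le_max_right j₀ hij)) _
  · obtain ⟨k, hk, hkO⟩ := hi₀ (max i j₀) (hlt i)
    refine ⟨k, ?_⟩
    rwa [max_eq_left ((le_max_right i j₀).trans hk)]

theorem exists_residue_chain_of_isEventualGap (hO : (O : Set E).OrdConnected) (hc : c.IsRegular)
    {x : 𝕀 → E} {b : 𝕀 → 𝕀} {ρ : 𝕀 → E} (hx : StrictMono x) (h : IsEventualGap O x b ρ) (i₀ : 𝕀)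
    (hmax : ∀ i, ρ i₀ / ρ i ∈ O) :
    ∃ f : 𝕀 → E, (∀ i, f i ∈ O) ∧ ∀ i j, i < j → f i < f j ∧ f j - f i ∉ mIdeal O := by
  obtain ⟨φ, hφ, hφ₀, hφb⟩ := hc.exists_strictMono_outrun i₀ b
  have he : 0 < ρ i₀ := (h i₀).1
  refine exists_residue_chain_of_unit_gaps (y := fun i => x (φ i) / ρ i₀)
    (fun i j hij => div_lt_div_of_pos_right (hx (hφ hij)) he) (fun i j hij => ?_) i₀
  obtain ⟨hρ, -, hgap⟩ := h (φ i)
  have hk := hgap (φ j) (hφb i j hij).le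
  rw [← sub_div, inv_div]
  exact ⟨Subring.div_mem_trans hρ.ne' hk.1 (h.div_mem hO hx (hφ₀ i)),
    Subring.div_mem_trans hρ.ne' (hmax _) hk.2⟩

theorem exists_value_chain_of_isEventualGap (hO : (O : Set E).OrdConnected) (hc : c.IsRegular)
    {x : 𝕀 → E} {b : 𝕀 → 𝕀} {ρ : 𝕀 → E} (hx : StrictMono x) (h : IsEventualGap O x b ρ)
    (hesc : ∀ i₀, ∃ i, ρ i₀ / ρ i ∉ O) :
    ∃ g : 𝕀 → E, (∀ i, g i ≠ 0) ∧ ∀ i j, i < j → g j / g i ∈ mIdeal O := by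
  obtain ⟨g, hg, hgm⟩ := exists_div_mem_mIdeal_of_unbounded hc (u := fun i => (ρ i)⁻¹)
    (fun i => inv_ne_zero (h i).1.ne')
    (fun i j hij => by simpa only [inv_div_inv] using h.div_mem hO hx hij)
    (fun i => by simpa only [inv_div_inv] using hesc i)
  exact ⟨fun i => (g i)⁻¹, fun i => inv_ne_zero (hg i),
    fun i j hij => by simpa only [inv_div_inv] using hgm i j hij⟩

theorem exists_residue_chain_or_value_chain (hO : (O : Set E).OrdConnected) (hc : c.IsRegular)
    {x : 𝕀 → E} (hx : StrictMono x) :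
    (∃ f : 𝕀 → E, (∀ i, f i ∈ O) ∧ ∀ i j, i < j → f i < f j ∧ f j - f i ∉ mIdeal O) ∨
    (∃ g : 𝕀 → E, (∀ i, g i ≠ 0) ∧ ∀ i j, i < j → g j / g i ∈ mIdeal O) ∨
    (∃ g : 𝕀 → E, (∀ i, g i ≠ 0) ∧ ∀ i j, i < j → g i / g j ∈ mIdeal O) := by
  by_cases hstable : ∀ i, ∃ b, i < b ∧ ∀ k, b ≤ k → (x k - x i) / (x b - x i) ∈ O
  · choose b hb hbO using hstable
    have hgap : IsEventualGap O x b fun i => x (b i) - x i := fun i =>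
      ⟨sub_pos.2 (hx (hb i)), hb i, fun k hk => ⟨hbO i k hk,
        Subring.div_mem_of_le hO (sub_pos.2 (hx (hb i))).le (sub_le_sub_right (hx.monotone hk) _)⟩⟩
    by_cases hmax : ∃ i₀, ∀ i, (x (b i₀) - x i₀) / (x (b i) - x i) ∈ O
    · obtain ⟨i₀, hi₀⟩ := hmax
      exact Or.inl (exists_residue_chain_of_isEventualGap hO hc hx hgap i₀ hi₀)
    · push Not at hmax
      exact Or.inr (Or.inl (exists_value_chain_of_isEventualGap hO hc hx hgap hmax))
  · push Not at hstable
    obtain ⟨i₀, hi₀⟩ := hstable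
    exact Or.inr (Or.inr (exists_reverse_value_chain_of_unstable hO hc hx i₀ hi₀))

end RegularCardinal

theorem stmt_6_general {E : Type*} [Field E] [LinearOrder E] [IsStrictOrderedRing E] (O : Subring E)
    (hconv : ∀ a b c : E, a ∈ O → c ∈ O → a ≤ b → b ≤ c → b ∈ O)
    (h : ∃ f : {o : Ordinal.{0} // o < (Cardinal.aleph 1).ord} → E, StrictMono f) :
    (∃ f : {o : Ordinal.{0} // o < (Cardinal.aleph 1).ord} → E,
        (∀ i, f i ∈ O) ∧ ∀ i j, i < j → f i < f j ∧ f j - f i ∉ mIdeal O) ∨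
    (∃ g : {o : Ordinal.{0} // o < (Cardinal.aleph 1).ord} → E,
        (∀ i, g i ≠ 0) ∧ ∀ i j, i < j → g j / g i ∈ mIdeal O) ∨
    (∃ g : {o : Ordinal.{0} // o < (Cardinal.aleph 1).ord} → E,
        (∀ i, g i ≠ 0) ∧ ∀ i j, i < j → g i / g j ∈ mIdeal O) := by
  obtain ⟨x, hx⟩ := h
  have hO : (O : Set E).OrdConnected := ⟨fun a ha b hb y hy => hconv a y b ha hb hy.1 hy.2⟩
  exact exists_residue_chain_or_value_chain hO isRegular_aleph_one hx

/-- If an ordered field E with a proper convex subring O contains a copy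
of ω₁, then the residue field contains a copy of ω₁ (a strictly increasing
ω₁-sequence in O whose successive differences are non-infinitesimal), or the value
group contains a copy of ω₁ (`g j / g i ∈ 𝔪` for `i < j`) or a copy of the reverse
of ω₁ (`g i / g j ∈ 𝔪` for `i < j`). -/
theorem stmt_6 {E : Type*} [Field E] [LinearOrder E] [IsStrictOrderedRing E] (O : Subring E)
    (hconv : ∀ a b c : E, a ∈ O → c ∈ O → a ≤ b → b ≤ c → b ∈ O)
    (hOne : (O : Set E) ≠ Set.univ)
    (h : ∃ f : {o : Ordinal.{0} // o < (Cardinal.aleph 1).ord} → E, StrictMono f) :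
    (∃ f : {o : Ordinal.{0} // o < (Cardinal.aleph 1).ord} → E,
        (∀ i, f i ∈ O) ∧ ∀ i j, i < j → f i < f j ∧ f j - f i ∉ mIdeal O) ∨
    (∃ g : {o : Ordinal.{0} // o < (Cardinal.aleph 1).ord} → E,
        (∀ i, g i ≠ 0) ∧ ∀ i j, i < j → g j / g i ∈ mIdeal O) ∨
    (∃ g : {o : Ordinal.{0} // o < (Cardinal.aleph 1).ord} → E,
        (∀ i, g i ≠ 0) ∧ ∀ i j, i < j → g i / g j ∈ mIdeal O) :=
  stmt_6_general O hconv h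
end

section
/- Let Γ be a linearly ordered abelian group fitting in a short exact sequence 0 → A → Γ → B → 0 of ordered abelian groups, where A is a convex subgroup and B = Γ/A with the induced order. If neither A nor B contains a subset order-isomorphic to ω₁, then Γ contains no subset order-isomorphic to ω₁. -/
/-!
Let `f : ω₁ → Γ` be strictly increasing and look at the classes `f i + A` in `Γ ⧸ A`. If one class
is uncountable, `ω₁` embeds into its index set, and subtracting a fixed member of the class gives a
copy of `ω₁` inside `A`. If the indices at which a new class first appears form an uncountable set,
`ω₁` embeds into it, and along that copy any two values lie in distinct classes, giving a copy
of `ω₁` in `Γ ⧸ A`. Otherwise `ω₁` would be a countable union of countable sets.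
-/

universe u

open Cardinal Ordinal Set

section WellOrder

variable {α : Type*} [LinearOrder α] [WellFoundedLT α]

theorem exists_strictMono_mem_of_mk_le {X : Set α} (hα : (#α).ord = typeLT α) (hX : #α ≤ #X) :
    ∃ g : α → α, StrictMono g ∧ ∀ i, g i ∈ X := by
  have hle : typeLT α ≤ typeLT X := calc
    typeLT α = (#α).ord := hα.symm
    _ ≤ (#X).ord := ord_le_ord.2 hX
    _ = (typeLT X).card.ord := by rw [card_type]
    _ ≤ typeLT X := ord_card_le _
  obtain ⟨e⟩ := type_le_iff'.1 hle
  exact ⟨fun i => e i, fun i j h => e.map_rel_iff.2 h, fun i => (e i).2⟩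

def firstOccurrences {β : Type*} (φ : α → β) : Set α := {i | ∀ j < i, φ i ≠ φ j}

theorem image_firstOccurrences {β : Type*} (φ : α → β) : φ '' firstOccurrences φ = range φ := by
  refine (image_subset_range _ _).antisymm ?_
  rintro _ ⟨i, rfl⟩
  obtain ⟨m, hm, hmin⟩ := wellFounded_lt.has_min (φ ⁻¹' {φ i}) ⟨i, rfl⟩
  exact ⟨m, fun j hj hφ => hmin j (hφ.symm.trans hm) hj, hm⟩

theorem countable_of_countable_firstOccurrences {β : Type*} {φ : α → β}
    (hT : (firstOccurrences φ).Countable) (hfib : ∀ i, (φ ⁻¹' {φ i}).Countable) : Countable α := by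
  rw [← countable_univ_iff, ← preimage_range φ, ← biUnion_preimage_singleton,
    ← image_firstOccurrences]
  exact (hT.image φ).biUnion fun _ ⟨i, _, hi⟩ => hi ▸ hfib i

end WellOrder

theorem ord_mk_Iio_ord (c : Cardinal) : (#(Iio c.ord)).ord = typeLT (Iio c.ord) := by
  simp [lift_ord]

theorem not_countable_Iio_ord_aleph_one : ¬ Countable (Iio (ℵ₁ : Cardinal.{u}).ord) := by
  rw [← mk_le_aleph0_iff]
  simp

theorem exists_strictMono_mem_of_not_countable {X : Set (Iio (ℵ₁ : Cardinal.{u}).ord)}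
    (hX : ¬ X.Countable) : ∃ g : Iio (ℵ₁ : Cardinal.{u}).ord → Iio (ℵ₁ : Cardinal.{u}).ord,
      StrictMono g ∧ ∀ i, g i ∈ X := by
  rw [← le_aleph0_iff_set_countable, not_le, ← aleph_one_le_iff] at hX
  exact exists_strictMono_mem_of_mk_le (ord_mk_Iio_ord ℵ₁) (by simpa using hX)

theorem stmt_16_general {Γ : Type*} [AddCommGroup Γ] [LinearOrder Γ] [IsOrderedAddMonoid Γ] (A : AddSubgroup Γ)
    (hA : ¬ ∃ f : {o : Ordinal.{0} // o < (Cardinal.aleph 1).ord} → Γ,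
      (∀ i, f i ∈ A) ∧ StrictMono f)
    (hB : ¬ ∃ f : {o : Ordinal.{0} // o < (Cardinal.aleph 1).ord} → Γ,
      ∀ i j, i < j → f i < f j ∧ f j - f i ∉ A) :
    ¬ ∃ f : {o : Ordinal.{0} // o < (Cardinal.aleph 1).ord} → Γ, StrictMono f := by
  rintro ⟨f, hf⟩
  let φ : Iio (ℵ₁ : Cardinal.{0}).ord → Γ ⧸ A := fun i => f i
  by_cases hfib : ∃ t, ¬ (φ ⁻¹' {φ t}).Countable
  · obtain ⟨t, hb⟩ := hfib
    obtain ⟨g, hg, hgt⟩ := exists_strictMono_mem_of_not_countable hb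
    exact hA ⟨fun i => f (g i) - f t, fun i => QuotientAddGroup.eq_iff_sub_mem.1 (hgt i),
      fun i j h => sub_lt_sub_right (hf (hg h)) _⟩
  by_cases hT : (firstOccurrences φ).Countable
  · push Not at hfib
    exact not_countable_Iio_ord_aleph_one (countable_of_countable_firstOccurrences hT hfib)
  · obtain ⟨g, hg, hgT⟩ := exists_strictMono_mem_of_not_countable hT
    exact hB ⟨fun i => f (g i), fun i j h =>
      ⟨hf (hg h), fun hmem => hgT j (g i) (hg h) (QuotientAddGroup.eq_iff_sub_mem.2 hmem)⟩⟩

/-- If A is a convex subgroup of a linearly ordered abelian group Γ and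
neither A (with the order from Γ) nor B = Γ/A (with the induced order: mk a < mk b iff
a < b and b - a ∉ A) contains a copy of ω₁, then Γ contains no copy of ω₁. -/
theorem stmt_16 {Γ : Type*} [AddCommGroup Γ] [LinearOrder Γ] [IsOrderedAddMonoid Γ] (A : AddSubgroup Γ)
    (hconvA : ∀ a b c : Γ, a ∈ A → c ∈ A → a ≤ b → b ≤ c → b ∈ A)
    (hA : ¬ ∃ f : {o : Ordinal.{0} // o < (Cardinal.aleph 1).ord} → Γ,
      (∀ i, f i ∈ A) ∧ StrictMono f)
    (hB : ¬ ∃ f : {o : Ordinal.{0} // o < (Cardinal.aleph 1).ord} → Γ,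
      ∀ i j, i < j → f i < f j ∧ f j - f i ∉ A) :
    ¬ ∃ f : {o : Ordinal.{0} // o < (Cardinal.aleph 1).ord} → Γ, StrictMono f :=
  stmt_16_general A hA hB
end
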